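/- arXiv:1804.10416 — 5 statements merged into one kernel-verified Lean document; each statement's English description precedes it below -/
import Mathlib

section
/- Let q_0, q_1,...,q_n be positive reals, 0 ≤ x_0 < 1, and define R_i = q_i·x_i + q_0·(1 − x_0) for nonnegative x_1,...,x_n with Σ_{i=1}^n x_i = 1 − x_0. Then R_max = max_{1≤i≤n} R_i satisfies (1 − x_0)·Q̄ ≤ R_max ≤ (1 − x_0)·Q_u, where Q̄ = q_0 + 1/(Σ_{i=1}^n 1/q_i) and Q_u = q_0 + max_{1≤i≤n} q_i. -/
theorem stmt5 (n : ℕ) (hn : 0 < n) (q0 : ℝ) (hq0 : 0 < q0) (q : Fin n → ℝ)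
    (hq : ∀ i, 0 < q i) (x0 : ℝ) (h0 : 0 ≤ x0) (h1 : x0 < 1)
    (x : Fin n → ℝ) (hx : ∀ i, 0 ≤ x i) (hsum : (∑ i, x i) = 1 - x0) :
    (1 - x0) * (q0 + (∑ i, (q i)⁻¹)⁻¹) ≤ (⨆ i, q i * x i + q0 * (1 - x0)) ∧
    (⨆ i, q i * x i + q0 * (1 - x0)) ≤ (1 - x0) * (q0 + ⨆ i, q i) := by
  have hne : Nonempty (Fin n) := ⟨⟨0, hn⟩⟩
  have hS : 0 < 1 - x0 := by linarith
  have hQ : 0 < ∑ i, (q i)⁻¹ :=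
    Finset.sum_pos (fun i _ => inv_pos.mpr (hq i)) Finset.univ_nonempty
  constructor
  · -- lower bound
    set c : ℝ := (1 - x0) * (∑ i, (q i)⁻¹)⁻¹ with hc
    have hex : ∃ i, c ≤ q i * x i := by
      by_contra hcon
      push_neg at hcon
      have hlt : (∑ i, x i) < ∑ i, c * (q i)⁻¹ := by
        apply Finset.sum_lt_sum_of_nonempty Finset.univ_nonempty
        intro i _
        have h := hcon i
        have hqi := hq i
        rw [← div_eq_mul_inv, lt_div_iff₀ hqi]
        linarith [h]
      rw [hsum, ← Finset.mul_sum] at hlt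
      rw [hc] at hlt
      rw [mul_assoc, inv_mul_cancel₀ (ne_of_gt hQ), mul_one] at hlt
      linarith
    obtain ⟨i, hi⟩ := hex
    have hb : BddAbove (Set.range fun i => q i * x i + q0 * (1 - x0)) :=
      Set.Finite.bddAbove (Set.finite_range _)
    calc (1 - x0) * (q0 + (∑ i, (q i)⁻¹)⁻¹) = c + q0 * (1 - x0) := by rw [hc]; ring
      _ ≤ q i * x i + q0 * (1 - x0) := by linarith
      _ ≤ ⨆ i, q i * x i + q0 * (1 - x0) := le_ciSup hb i
  · -- upper bound
    apply ciSup_le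
    intro i
    have hqs : q i ≤ ⨆ j, q j := le_ciSup (Set.Finite.bddAbove (Set.finite_range _)) i
    have hxle : x i ≤ 1 - x0 := by
      rw [← hsum]
      exact Finset.single_le_sum (fun j _ => hx j) (Finset.mem_univ i)
    have : q i * x i ≤ (⨆ j, q j) * (1 - x0) := by
      apply mul_le_mul hqs hxle (hx i) (le_trans (le_of_lt (hq i)) hqs)
    nlinarith
end

section
/- Let K, φ, α, Q̄ > 0 and define h₁(x) = (K/Q̄²)·x³/(1−x)² − φx + α(1−x)·Q̄ on [0,1). Then h₁'(x) = (K/Q̄²)·(2y³ + 3y²) − (φ + αQ̄) where y = x/(1−x), and h₁ has a unique critical point x₀* ∈ (0,1) characterized by 2y*³ + 3y*² = (φ + αQ̄)·Q̄²/K with y* = x₀*/(1−x₀*), at which h₁ attains its minimum on [0,1). -/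
/-!
Writing `y = x / (1 - x)`, the derivative of `h₁` is `(K / Q²) (2y³ + 3y²) - (φ + αQ)`.
Both `x ↦ x / (1 - x)` on `[0, 1)` and `y ↦ 2y³ + 3y²` on `[0, ∞)` are strictly increasing
bijections onto `[0, ∞)`, so the derivative is strictly increasing and vanishes at exactly
one point of `(0, 1)`; by the first-derivative test this critical point is the minimum.
-/

open Set

lemma strictMonoOn_two_mul_cube_add_three_mul_sq :
    StrictMonoOn (fun y : ℝ => 2 * y ^ 3 + 3 * y ^ 2) (Ici 0) := by
  intro a ha b hb hab
  simp only [mem_Ici] at ha hb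
  nlinarith [mul_nonneg ha hb, mul_pos (sub_pos.mpr hab) (sub_pos.mpr hab)]

lemma exists_pos_two_mul_cube_add_three_mul_sq_eq {c : ℝ} (hc : 0 < c) :
    ∃ y : ℝ, 0 < y ∧ 2 * y ^ 3 + 3 * y ^ 2 = c := by
  have hmem : c ∈ Icc (2 * 0 ^ 3 + 3 * 0 ^ 2 : ℝ) (2 * (c + 1) ^ 3 + 3 * (c + 1) ^ 2) :=
    ⟨by linarith, by nlinarith [pow_pos hc 3]⟩
  obtain ⟨y, hy, hyc⟩ := intermediate_value_Icc (by linarith : (0 : ℝ) ≤ c + 1)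
    (by fun_prop : ContinuousOn (fun y : ℝ => 2 * y ^ 3 + 3 * y ^ 2) _) hmem
  refine ⟨y, hy.1.lt_of_ne ?_, hyc⟩
  rintro rfl
  norm_num at hyc
  linarith

lemma strictMonoOn_div_one_sub : StrictMonoOn (fun x : ℝ => x / (1 - x)) (Iio 1) := by
  intro a ha b hb hab
  simp only [mem_Iio] at ha hb
  rw [div_lt_div_iff₀ (sub_pos.mpr ha) (sub_pos.mpr hb)]
  nlinarith

lemma div_one_sub_div_one_add {y : ℝ} (hy : 1 + y ≠ 0) : y / (1 + y) / (1 - y / (1 + y)) = y := by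
  field_simp
  ring_nf

lemma hasDerivAt_cube_div_one_sub_sq {x : ℝ} (hx : x ≠ 1) :
    HasDerivAt (fun x : ℝ => x ^ 3 / (1 - x) ^ 2)
      (2 * (x / (1 - x)) ^ 3 + 3 * (x / (1 - x)) ^ 2) x := by
  have h1x : 1 - x ≠ 0 := sub_ne_zero.mpr hx.symm
  refine ((hasDerivAt_pow 3 x).div (((hasDerivAt_id x).const_sub 1).pow 2)
    (pow_ne_zero 2 h1x)).congr_deriv ?_
  simp only [id, Pi.pow_apply]
  push_cast
  field_simp
  ring

lemma hasDerivAt_relaxedOffloadingObjective (K φ α Q : ℝ) {x : ℝ} (hx : x ≠ 1) :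
    HasDerivAt (fun x : ℝ => K / Q ^ 2 * (x ^ 3 / (1 - x) ^ 2) - φ * x + α * (1 - x) * Q)
      (K / Q ^ 2 * (2 * (x / (1 - x)) ^ 3 + 3 * (x / (1 - x)) ^ 2) - (φ + α * Q)) x :=
  (((hasDerivAt_cube_div_one_sub_sq hx).const_mul (K / Q ^ 2)).sub
    ((hasDerivAt_id x).const_mul φ)).add
    ((((hasDerivAt_id x).const_sub 1).const_mul α).mul_const Q) |>.congr_deriv (by ring)

lemma isMinOn_Ico_of_hasDerivAt_of_monotoneOn {f f' : ℝ → ℝ} {a b c : ℝ}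
    (hf : ∀ x ∈ Ico a c, HasDerivAt f (f' x) x) (hf' : MonotoneOn f' (Ico a c))
    (hb : b ∈ Ico a c) (hb0 : f' b = 0) : IsMinOn f (Ico a c) b := by
  have hac : a < c := hb.1.trans_lt hb.2
  have hsub₀ : Ioo a b ⊆ Ico a c := fun x hx => ⟨hx.1.le, hx.2.trans hb.2⟩
  have hsub₁ : Ioo b c ⊆ Ico a c := fun x hx => ⟨hb.1.trans hx.1.le, hx.2⟩
  refine isMinOn_Ico_of_deriv (hf a ⟨le_rfl, hac⟩).continuousAt (hf b hb).continuousAt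
    (fun x hx => (hf x (hsub₀ hx)).differentiableAt.differentiableWithinAt)
    (fun x hx => (hf x (hsub₁ hx)).differentiableAt.differentiableWithinAt) ?_ ?_
  · intro x hx
    rw [(hf x (hsub₀ hx)).deriv, ← hb0]
    exact hf' (hsub₀ hx) hb hx.2.le
  · intro x hx
    rw [(hf x (hsub₁ hx)).deriv, ← hb0]
    exact hf' hb (hsub₁ hx) hx.1.le

theorem stmt8 (K φ α Q : ℝ) (hK : 0 < K) (hφ : 0 < φ) (hα : 0 < α) (hQ : 0 < Q) :
    (∀ x ∈ Set.Ico (0:ℝ) 1,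
      HasDerivAt (fun x : ℝ => K / Q ^ 2 * (x ^ 3 / (1 - x) ^ 2) - φ * x + α * (1 - x) * Q)
        (K / Q ^ 2 * (2 * (x / (1 - x)) ^ 3 + 3 * (x / (1 - x)) ^ 2) - (φ + α * Q)) x) ∧
    ∃! x₀ : ℝ, x₀ ∈ Set.Ioo (0:ℝ) 1 ∧
      2 * (x₀ / (1 - x₀)) ^ 3 + 3 * (x₀ / (1 - x₀)) ^ 2 = (φ + α * Q) * Q ^ 2 / K ∧
      ∀ x ∈ Set.Ico (0:ℝ) 1,
        K / Q ^ 2 * (x₀ ^ 3 / (1 - x₀) ^ 2) - φ * x₀ + α * (1 - x₀) * Q ≤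
        K / Q ^ 2 * (x ^ 3 / (1 - x) ^ 2) - φ * x + α * (1 - x) * Q := by
  set g : ℝ → ℝ := fun x => 2 * (x / (1 - x)) ^ 3 + 3 * (x / (1 - x)) ^ 2 with hg
  have hgmono : StrictMonoOn g (Ico 0 1) :=
    strictMonoOn_two_mul_cube_add_three_mul_sq.comp
      (strictMonoOn_div_one_sub.mono fun x hx => hx.2)
      fun x hx => div_nonneg hx.1 (sub_nonneg.mpr hx.2.le)
  obtain ⟨y, hy, hyc⟩ := exists_pos_two_mul_cube_add_three_mul_sq_eq
    (by positivity : 0 < (φ + α * Q) * Q ^ 2 / K)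
  have hx₀ : y / (1 + y) ∈ Ioo (0 : ℝ) 1 :=
    ⟨by positivity, (div_lt_one (by positivity)).mpr (by linarith)⟩
  have hgx₀ : g (y / (1 + y)) = (φ + α * Q) * Q ^ 2 / K := by
    simp only [hg, div_one_sub_div_one_add (by positivity : 1 + y ≠ 0), hyc]
  have hderiv : ∀ x ∈ Ico (0 : ℝ) 1, _ := fun x hx =>
    hasDerivAt_relaxedOffloadingObjective K φ α Q hx.2.ne
  have hmin := isMinOn_Ico_of_hasDerivAt_of_monotoneOn hderiv
    (fun a ha b hb hab => sub_le_sub_right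
      (mul_le_mul_of_nonneg_left (hgmono.monotoneOn ha hb hab) (by positivity)) _)
    (Ioo_subset_Ico_self hx₀) (by show K / Q ^ 2 * g _ - _ = 0; rw [hgx₀]; field_simp; ring)
  refine ⟨hderiv, y / (1 + y), ⟨hx₀, hgx₀, fun x hx => hmin hx⟩, ?_⟩
  rintro x ⟨hx, hgx, -⟩
  exact hgmono.injOn (Ioo_subset_Ico_self hx) (Ioo_subset_Ico_self hx₀) (hgx.trans hgx₀.symm)
end

section
/- Let K, φ, α > 0. For each Q̄ > 0 let y*(Q̄) be the unique positive root of 2y³ + 3y² = (φ + αQ̄)Q̄²/K, and set ξ = y*(Q̄)/Q̄. If 3Kξ² − φ > 0, then Q̄ = (3Kξ² − φ)/(α − 2Kξ³), and consequently ξ, and therefore OPT = 3Kξ² − φ, is a strictly monotonically increasing function of Q̄. -/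
/-!
Substituting `y = ξ Q` into `2y³ + 3y² = (φ + αQ)Q²/K` and dividing by `Q²/K` gives
`Q (α - 2Kξ³) = 3Kξ² - φ`. Where the right side is positive, `Q` is the fraction
`(3Kξ² - φ)/(α - 2Kξ³)`, whose numerator grows and whose positive denominator shrinks
as `ξ > 0` grows. So `Q` is strictly increasing in `ξ`, and inverting, `ξ` is strictly increasing in `Q`.
-/

open Set

lemma mul_sub_cube_eq_of_cubic_root {K φ α Q y : ℝ} (hK : K ≠ 0) (hQ : Q ≠ 0)
    (h : 2 * y ^ 3 + 3 * y ^ 2 = (φ + α * Q) * Q ^ 2 / K) :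
    Q * (α - 2 * K * (y / Q) ^ 3) = 3 * K * (y / Q) ^ 2 - φ := by
  field_simp at h ⊢
  linear_combination -h

lemma eq_div_of_mul_eq_of_pos {Q D N : ℝ} (hQ : 0 < Q) (hN : 0 < N) (h : Q * D = N) :
    0 < D ∧ Q = N / D := by
  have hD : 0 < D := pos_of_mul_pos_right (h ▸ hN) hQ.le
  exact ⟨hD, (eq_div_iff hD.ne').2 h⟩

lemma strictMonoOn_const_mul_sq_sub {K : ℝ} (hK : 0 < K) (φ : ℝ) :
    StrictMonoOn (fun ξ : ℝ => 3 * K * ξ ^ 2 - φ) (Ioi 0) := fun a ha b _ hab => by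
  have := pow_lt_pow_left₀ hab (le_of_lt ha) two_ne_zero
  simp only
  nlinarith

lemma strictMonoOn_ratio {K : ℝ} (hK : 0 < K) (φ α : ℝ) :
    StrictMonoOn (fun ξ : ℝ => (3 * K * ξ ^ 2 - φ) / (α - 2 * K * ξ ^ 3))
      {ξ | 0 < ξ ∧ 0 < 3 * K * ξ ^ 2 - φ ∧ 0 < α - 2 * K * ξ ^ 3} := by
  rintro a ⟨ha, hNa, hDa⟩ b ⟨hb, -, hDb⟩ hab
  have hN : 3 * K * a ^ 2 - φ < 3 * K * b ^ 2 - φ :=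
    strictMonoOn_const_mul_sq_sub hK φ ha hb hab
  have hD : α - 2 * K * b ^ 3 ≤ α - 2 * K * a ^ 3 := by
    have := pow_le_pow_left₀ ha.le hab.le 3
    nlinarith
  calc (3 * K * a ^ 2 - φ) / (α - 2 * K * a ^ 3)
      ≤ (3 * K * a ^ 2 - φ) / (α - 2 * K * b ^ 3) := div_le_div_of_nonneg_left hNa.le hDb hD
    _ < (3 * K * b ^ 2 - φ) / (α - 2 * K * b ^ 3) := div_lt_div_of_pos_right hN hDb

theorem stmt10_general (K φ α : ℝ) (hK : 0 < K) :
    (∀ Q y : ℝ, 0 < Q → 0 < y → 2 * y ^ 3 + 3 * y ^ 2 = (φ + α * Q) * Q ^ 2 / K →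
      0 < 3 * K * (y / Q) ^ 2 - φ →
      Q = (3 * K * (y / Q) ^ 2 - φ) / (α - 2 * K * (y / Q) ^ 3)) ∧
    (∀ Q₁ Q₂ y₁ y₂ : ℝ, 0 < Q₁ → 0 < Q₂ → 0 < y₁ → 0 < y₂ →
      2 * y₁ ^ 3 + 3 * y₁ ^ 2 = (φ + α * Q₁) * Q₁ ^ 2 / K →
      2 * y₂ ^ 3 + 3 * y₂ ^ 2 = (φ + α * Q₂) * Q₂ ^ 2 / K →
      0 < 3 * K * (y₁ / Q₁) ^ 2 - φ → 0 < 3 * K * (y₂ / Q₂) ^ 2 - φ →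
      Q₁ < Q₂ →
      y₁ / Q₁ < y₂ / Q₂ ∧ 3 * K * (y₁ / Q₁) ^ 2 - φ < 3 * K * (y₂ / Q₂) ^ 2 - φ) := by
  have hQ_eq : ∀ Q y : ℝ, 0 < Q → 2 * y ^ 3 + 3 * y ^ 2 = (φ + α * Q) * Q ^ 2 / K →
      0 < 3 * K * (y / Q) ^ 2 - φ →
      0 < α - 2 * K * (y / Q) ^ 3 ∧ Q = (3 * K * (y / Q) ^ 2 - φ) / (α - 2 * K * (y / Q) ^ 3) :=
    fun Q y hQ h hN =>
      eq_div_of_mul_eq_of_pos hQ hN (mul_sub_cube_eq_of_cubic_root hK.ne' hQ.ne' h)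
  refine ⟨fun Q y hQ _ h hN => (hQ_eq Q y hQ h hN).2, ?_⟩
  intro Q₁ Q₂ y₁ y₂ hQ₁ hQ₂ hy₁ hy₂ h₁ h₂ hN₁ hN₂ hQ
  obtain ⟨hD₁, hQ₁_eq⟩ := hQ_eq Q₁ y₁ hQ₁ h₁ hN₁
  obtain ⟨hD₂, hQ₂_eq⟩ := hQ_eq Q₂ y₂ hQ₂ h₂ hN₂
  have hξ₁ : 0 < y₁ / Q₁ := div_pos hy₁ hQ₁
  have hξ₂ : 0 < y₂ / Q₂ := div_pos hy₂ hQ₂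
  have hξ : y₁ / Q₁ < y₂ / Q₂ := by
    rw [hQ₁_eq, hQ₂_eq] at hQ
    exact (strictMonoOn_ratio hK φ α).lt_iff_lt ⟨hξ₁, hN₁, hD₁⟩ ⟨hξ₂, hN₂, hD₂⟩ |>.1 hQ
  exact ⟨hξ, strictMonoOn_const_mul_sq_sub hK φ hξ₁ hξ₂ hξ⟩

theorem stmt10 (K φ α : ℝ) (hK : 0 < K) (hφ : 0 < φ) (hα : 0 < α) :
    (∀ Q y : ℝ, 0 < Q → 0 < y → 2 * y ^ 3 + 3 * y ^ 2 = (φ + α * Q) * Q ^ 2 / K →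
      0 < 3 * K * (y / Q) ^ 2 - φ →
      Q = (3 * K * (y / Q) ^ 2 - φ) / (α - 2 * K * (y / Q) ^ 3)) ∧
    (∀ Q₁ Q₂ y₁ y₂ : ℝ, 0 < Q₁ → 0 < Q₂ → 0 < y₁ → 0 < y₂ →
      2 * y₁ ^ 3 + 3 * y₁ ^ 2 = (φ + α * Q₁) * Q₁ ^ 2 / K →
      2 * y₂ ^ 3 + 3 * y₂ ^ 2 = (φ + α * Q₂) * Q₂ ^ 2 / K →
      0 < 3 * K * (y₁ / Q₁) ^ 2 - φ → 0 < 3 * K * (y₂ / Q₂) ^ 2 - φ →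
      Q₁ < Q₂ →
      y₁ / Q₁ < y₂ / Q₂ ∧ 3 * K * (y₁ / Q₁) ^ 2 - φ < 3 * K * (y₂ / Q₂) ^ 2 - φ) :=
  stmt10_general K φ α hK
end

section
/- Let K, φ, α > 0 and suppose Q̄ > R_max > 0 satisfy the implicit relation 2Q̄³ − 3Q̄²·R_max + R_max³ = ((φ/K)·Q̄² + (α/K)·Q̄³)·R_max³. Then along this relation dR_max/dQ̄ > 0; that is, R_max is a strictly increasing function of Q̄. -/
/-!
Write `c = (φ/K) Q̄² + (α/K) Q̄³` and `r = R_max`. Differentiating the relation gives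
`K₁ · r' = K₂`. At the point itself the relation reads `c r³ = (Q̄ - r)² (2Q̄ + r) > 0`, so `c > 0`
and `K₁ = 3(Q̄² - r²) + 3 c r² > 0`. Eliminating the `α` term with the same identity turns
`Q̄ K₂` into `3 r (Q̄² - r²) + (φ/K) Q̄² r³ > 0`.
-/

open Filter Topology

lemma mul_deriv_eq_of_eventually_cubic_relation {R : ℝ → ℝ} {Q d : ℝ} (a b : ℝ)
    (hrel : ∀ᶠ q in 𝓝 Q,
      2 * q ^ 3 - 3 * q ^ 2 * R q + R q ^ 3 = (a * q ^ 2 + b * q ^ 3) * R q ^ 3)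
    (hd : HasDerivAt R d Q) :
    (3 * Q ^ 2 - 3 * R Q ^ 2 + 3 * R Q ^ 2 * (a * Q ^ 2 + b * Q ^ 3)) * d =
      6 * Q ^ 2 - 6 * Q * R Q - (2 * a * Q + 3 * b * Q ^ 2) * R Q ^ 3 := by
  have hq := hasDerivAt_id' Q
  have hF := ((((hq.fun_pow 3).const_mul 2).sub (((hq.fun_pow 2).const_mul 3).mul hd)).add
    (hd.fun_pow 3)).sub
      ((((hq.fun_pow 2).const_mul a).add ((hq.fun_pow 3).const_mul b)).mul (hd.fun_pow 3))
  have hF₀ := (hF.congr_of_eventuallyEq (f₁ := fun _ => 0) <| hrel.mono fun q hq => by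
    simp only [Pi.sub_apply, Pi.add_apply, Pi.mul_apply, hq, sub_self]).unique
      (hasDerivAt_const Q 0)
  simp only [Pi.add_apply, Nat.cast_ofNat] at hF₀
  linear_combination -hF₀

lemma cubic_coeff_pos {Q r c : ℝ} (hr : 0 < r) (hrQ : r < Q)
    (hrel : 2 * Q ^ 3 - 3 * Q ^ 2 * r + r ^ 3 = c * r ^ 3) : 0 < c := by
  have hfactor : c * r ^ 3 = (Q - r) ^ 2 * (2 * Q + r) := by linear_combination -hrel
  have : 0 < c * r ^ 3 := hfactor ▸ mul_pos (pow_pos (sub_pos.2 hrQ) 2) (by linarith)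
  exact pos_of_mul_pos_left this (by positivity)

lemma implicit_slope_denominator_pos {Q r c : ℝ} (hr : 0 < r) (hrQ : r < Q)
    (hrel : 2 * Q ^ 3 - 3 * Q ^ 2 * r + r ^ 3 = c * r ^ 3) :
    0 < 3 * Q ^ 2 - 3 * r ^ 2 + 3 * r ^ 2 * c := by
  have hsq : r ^ 2 < Q ^ 2 := pow_lt_pow_left₀ hrQ hr.le two_ne_zero
  nlinarith [mul_pos (pow_pos hr 2) (cubic_coeff_pos hr hrQ hrel)]

lemma implicit_slope_numerator_pos {Q r a b : ℝ} (ha : 0 ≤ a) (hr : 0 < r) (hrQ : r < Q)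
    (hrel : 2 * Q ^ 3 - 3 * Q ^ 2 * r + r ^ 3 = (a * Q ^ 2 + b * Q ^ 3) * r ^ 3) :
    0 < 6 * Q ^ 2 - 6 * Q * r - (2 * a * Q + 3 * b * Q ^ 2) * r ^ 3 := by
  have hQ : 0 < Q := hr.trans hrQ
  have hsq : 0 < Q ^ 2 - r ^ 2 := by nlinarith
  have hscaled : Q * (6 * Q ^ 2 - 6 * Q * r - (2 * a * Q + 3 * b * Q ^ 2) * r ^ 3) =
      3 * r * (Q ^ 2 - r ^ 2) + a * Q ^ 2 * r ^ 3 := by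
    linear_combination 3 * hrel
  refine pos_of_mul_pos_right (hscaled ▸ ?_) hQ.le
  positivity

theorem stmt11_general (K φ α : ℝ) (hK : 0 < K) (hφ : 0 < φ)
    (R : ℝ → ℝ) (Q : ℝ) (hRpos : 0 < R Q) (hlt : R Q < Q)
    (hrel : ∀ᶠ q in nhds Q,
      2 * q ^ 3 - 3 * q ^ 2 * R q + (R q) ^ 3 =
        (φ / K * q ^ 2 + α / K * q ^ 3) * (R q) ^ 3)
    (d : ℝ) (hd : HasDerivAt R d Q) : 0 < d := by
  have hrelQ := hrel.self_of_nhds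
  have hK₁ := implicit_slope_denominator_pos hRpos hlt hrelQ
  have hK₂ := implicit_slope_numerator_pos (div_pos hφ hK).le hRpos hlt hrelQ
  rw [← mul_deriv_eq_of_eventually_cubic_relation _ _ hrel hd] at hK₂
  exact pos_of_mul_pos_right hK₂ hK₁.le

theorem stmt11 (K φ α : ℝ) (hK : 0 < K) (hφ : 0 < φ) (hα : 0 < α)
    (R : ℝ → ℝ) (Q : ℝ) (hQ : 0 < Q) (hRpos : 0 < R Q) (hlt : R Q < Q)
    (hrel : ∀ᶠ q in nhds Q,
      2 * q ^ 3 - 3 * q ^ 2 * R q + (R q) ^ 3 =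
        (φ / K * q ^ 2 + α / K * q ^ 3) * (R q) ^ 3)
    (d : ℝ) (hd : HasDerivAt R d Q) : 0 < d :=
  stmt11_general K φ α hK hφ R Q hRpos hlt hrel d hd
end

section
/- Let K, φ, α, Q̄, Q_u > 0 with Q̄ ≤ Q_u, R* = (2K/α)^{1/3}, and K/R*² + αR* > φ. Define h₁(x) = (K/Q̄²)x³/(1−x)² − φx + α(1−x)Q̄ on [0, Q̄/(R*+Q̄)], h₂(x) = (K/Q_u²)x³/(1−x)² − φx + α(1−x)Q_u on [Q_u/(R*+Q_u), 1), and h₃(x) = (K/R*² − φ + αR*)x on [Q̄/(R*+Q̄), Q_u/(R*+Q_u)]. Then min h₁ ≤ min h₃ ≤ min h₂, where each minimum is over the stated domain. -/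
/-!
With `α R*³ = 2K`, the curved branch `h_Q` dominates the linear branch `x ↦ c x`,
`c = K/R*² - φ + αR*`, on `[0, 1)`: the difference is
`K (R* x - Q(1-x))² (R* x + 2Q(1-x)) / (Q² (1-x)² R*³)`, the AM-GM identity
`p³ + 2q³ - 3pq² = (p-q)²(p+2q)` in disguise. It vanishes exactly at the kink `x = Q/(R*+Q)`.
Since `c > 0`, the minimum of `h₁` is at most `c Q̄/(R*+Q̄) ≤ min h₃`, and every value of `h₂`
is at least `c Q_u/(R*+Q_u) ≥ min h₃`.
-/

noncomputable def curvedBranch (K φ α Q x : ℝ) : ℝ :=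
  K / Q ^ 2 * (x ^ 3 / (1 - x) ^ 2) - φ * x + α * (1 - x) * Q

theorem curvedBranch_sub_linear {K φ α Q R x : ℝ} (hQ : Q ≠ 0) (hR : R ≠ 0) (hx : x ≠ 1)
    (hαR : α * R ^ 3 = 2 * K) :
    curvedBranch K φ α Q x - (K / R ^ 2 - φ + α * R) * x
      = K * (R * x - Q * (1 - x)) ^ 2 * (R * x + 2 * Q * (1 - x)) /
          (Q ^ 2 * (1 - x) ^ 2 * R ^ 3) := by
  have hu : 1 - x ≠ 0 := sub_ne_zero.mpr (Ne.symm hx)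
  have hα : α = 2 * K / R ^ 3 := by field_simp; linarith
  subst hα
  unfold curvedBranch
  field_simp
  ring

theorem linear_le_curvedBranch {K φ α Q R x : ℝ} (hK : 0 ≤ K) (hQ : 0 < Q) (hR : 0 < R)
    (hx₀ : 0 ≤ x) (hx₁ : x < 1) (hαR : α * R ^ 3 = 2 * K) :
    (K / R ^ 2 - φ + α * R) * x ≤ curvedBranch K φ α Q x := by
  rw [← sub_nonneg, curvedBranch_sub_linear hQ.ne' hR.ne' hx₁.ne hαR]
  positivity

theorem curvedBranch_eq_linear_at_kink {K φ α Q R : ℝ} (hQ : 0 < Q) (hR : 0 < R)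
    (hαR : α * R ^ 3 = 2 * K) :
    curvedBranch K φ α Q (Q / (R + Q)) = (K / R ^ 2 - φ + α * R) * (Q / (R + Q)) := by
  have hx : Q / (R + Q) ≠ 1 := ((div_lt_one (by positivity)).2 (by linarith)).ne
  have hzero : R * (Q / (R + Q)) - Q * (1 - Q / (R + Q)) = 0 := by
    field_simp; ring
  have h := curvedBranch_sub_linear (φ := φ) hQ.ne' hR.ne' hx hαR
  rw [hzero] at h
  simpa [sub_eq_zero] using h

theorem rpow_one_div_three_pow_three {y : ℝ} (hy : 0 ≤ y) : (y ^ ((1 : ℝ) / 3)) ^ 3 = y := by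
  rw [one_div]
  exact_mod_cast Real.rpow_inv_natCast_pow hy (n := 3) (by norm_num)

theorem stmt17_general (K φ α Qb Qu : ℝ) (hK : 0 < K) (hα : 0 < α)
    (hQb : 0 < Qb) (hQQ : Qb ≤ Qu)
    (Rs : ℝ) (hRs : Rs = (2 * K / α) ^ ((1:ℝ)/3))
    (hass : φ < K / Rs ^ 2 + α * Rs)
    (m1 m2 m3 : ℝ)
    (h1 : IsLeast ((fun x : ℝ => K / Qb ^ 2 * (x ^ 3 / (1 - x) ^ 2) - φ * x + α * (1 - x) * Qb) ''
      Set.Icc 0 (Qb / (Rs + Qb))) m1)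
    (h3 : IsLeast ((fun x : ℝ => (K / Rs ^ 2 - φ + α * Rs) * x) ''
      Set.Icc (Qb / (Rs + Qb)) (Qu / (Rs + Qu))) m3)
    (h2 : IsLeast ((fun x : ℝ => K / Qu ^ 2 * (x ^ 3 / (1 - x) ^ 2) - φ * x + α * (1 - x) * Qu) ''
      Set.Ico (Qu / (Rs + Qu)) 1) m2) :
    m1 ≤ m3 ∧ m3 ≤ m2 := by
  have hRs_pos : 0 < Rs := by rw [hRs]; positivity
  have hαR : α * Rs ^ 3 = 2 * K := by
    rw [hRs, rpow_one_div_three_pow_three (by positivity)]; field_simp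
  have hQu : 0 < Qu := hQb.trans_le hQQ
  have hc : 0 < K / Rs ^ 2 - φ + α * Rs := by linarith
  obtain ⟨x₃, ⟨hax₃, hx₃b⟩, rfl⟩ := h3.1
  constructor
  · calc m1 ≤ curvedBranch K φ α Qb (Qb / (Rs + Qb)) := h1.2 ⟨_, ⟨by positivity, le_rfl⟩, rfl⟩
      _ = (K / Rs ^ 2 - φ + α * Rs) * (Qb / (Rs + Qb)) :=
        curvedBranch_eq_linear_at_kink hQb hRs_pos hαR
      _ ≤ (K / Rs ^ 2 - φ + α * Rs) * x₃ := by gcongr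
  · obtain ⟨x₂, ⟨hbx₂, hx₂⟩, rfl⟩ := h2.1
    have hx₂_nonneg : 0 ≤ x₂ := (by positivity : 0 ≤ Qu / (Rs + Qu)).trans hbx₂
    calc (K / Rs ^ 2 - φ + α * Rs) * x₃ ≤ (K / Rs ^ 2 - φ + α * Rs) * x₂ := by gcongr; linarith
      _ ≤ curvedBranch K φ α Qu x₂ :=
        linear_le_curvedBranch hK.le hQu hRs_pos hx₂_nonneg hx₂ hαR

theorem stmt17 (K φ α Qb Qu : ℝ) (hK : 0 < K) (hφ : 0 < φ) (hα : 0 < α)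
    (hQb : 0 < Qb) (hQQ : Qb ≤ Qu)
    (Rs : ℝ) (hRs : Rs = (2 * K / α) ^ ((1:ℝ)/3))
    (hass : φ < K / Rs ^ 2 + α * Rs)
    (m1 m2 m3 : ℝ)
    (h1 : IsLeast ((fun x : ℝ => K / Qb ^ 2 * (x ^ 3 / (1 - x) ^ 2) - φ * x + α * (1 - x) * Qb) ''
      Set.Icc 0 (Qb / (Rs + Qb))) m1)
    (h3 : IsLeast ((fun x : ℝ => (K / Rs ^ 2 - φ + α * Rs) * x) ''
      Set.Icc (Qb / (Rs + Qb)) (Qu / (Rs + Qu))) m3)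
    (h2 : IsLeast ((fun x : ℝ => K / Qu ^ 2 * (x ^ 3 / (1 - x) ^ 2) - φ * x + α * (1 - x) * Qu) ''
      Set.Ico (Qu / (Rs + Qu)) 1) m2) :
    m1 ≤ m3 ∧ m3 ≤ m2 :=
  stmt17_general K φ α Qb Qu hK hα hQb hQQ Rs hRs hass m1 m2 m3 h1 h3 h2
end
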